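/- Let n ≥ 1, let λ = (λ_1,…,λ_k) be a partition, and let μ be a partition of n. Then in ℂ[S_n], e_λ(J_1,…,J_n) · C_μ = Σ C_{μ^(1)} C_{μ^(2)} ⋯ C_{μ^(k)} C_μ, where the sum is over all ordered k-tuples (μ^(1),…,μ^(k)) of partitions of n with ℓ*(μ^(i)) = λ_i for every i = 1,…,k. -/

import Mathlib

/-!
Jucys' theorem does the work. Expanding `e_d(J_1, …, J_n)` with the factors in increasing order
writes it as the sum of the products `(a₁ b₁) ⋯ (a_d b_d)` with `aᵢ < bᵢ` and `b₁ < ⋯ < b_d`.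
Every permutation arises exactly once, with `d` the colength `ℓ*` of its cycle type: if `τ` moves
only points below `b`, right multiplication by `(a b)`, `a < b`, inserts `b` into the cycle of `a`
and raises `ℓ*` by one, and peeling `b` off again with `a = σ⁻¹ b` undoes this. Hence
`e_d(J) = Σ_{ℓ*(ν) = d} C_ν`, and the theorem follows by multiplying out the product of these sums.
-/

/-- The Jucys–Murphy element `J_b = Σ_{a < b} (a b)` in the group algebra `ℂ[S_n]`. -/
noncomputable def JM (n : ℕ) (b : Fin n) : MonoidAlgebra ℂ (Equiv.Perm (Fin n)) :=
  ∑ a ∈ Finset.univ.filter (· < b), MonoidAlgebra.of ℂ (Equiv.Perm (Fin n)) (Equiv.swap a b)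

/-- The `d`-th elementary symmetric polynomial evaluated at the Jucys–Murphy elements
(products taken in increasing order; the `J_b` pairwise commute). -/
noncomputable def esymmJM (n : ℕ) (d : ℕ) : MonoidAlgebra ℂ (Equiv.Perm (Fin n)) :=
  ∑ S ∈ Finset.univ.powersetCard d, ((S.sort (· ≤ ·)).map (JM n)).prod

/-- The cycle type of a permutation of `Fin n`, including fixed points as parts equal to `1`. -/
noncomputable def fullCycleType {n : ℕ} (σ : Equiv.Perm (Fin n)) : Multiset ℕ :=
  σ.cycleType + Multiset.replicate (n - σ.support.card) 1

/-- The cycle sum `C_ν = Σ_{g ∈ cyc(ν)} g ∈ ℂ[S_n]` over the conjugacy class of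
cycle type `ν`. -/
noncomputable def cycleSum (n : ℕ) (ν : Nat.Partition n) :
    MonoidAlgebra ℂ (Equiv.Perm (Fin n)) :=
  ∑ σ ∈ Finset.univ.filter fun σ : Equiv.Perm (Fin n) => fullCycleType σ = ν.parts,
    MonoidAlgebra.of ℂ (Equiv.Perm (Fin n)) σ

open Finset

theorem List.prod_ofFn_sum {R ι : Type*} [Semiring R] :
    ∀ {k : ℕ} (t : Fin k → Finset ι) (f : Fin k → ι → R),
    (List.ofFn fun i => ∑ a ∈ t i, f i a).prod =
      ∑ g ∈ Fintype.piFinset t, (List.ofFn fun i => f i (g i)).prod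
  | 0, _, _ => by simp
  | k + 1, t, f => by
    have hpi : Fintype.piFinset t =
        (t 0 ×ˢ Fintype.piFinset (Fin.tail t)).map (Fin.consEquiv fun _ => ι).toEmbedding := by
      simpa using filter_piFinset_eq_map_consEquiv t (fun _ => True)
    rw [List.ofFn_succ, List.prod_cons, List.prod_ofFn_sum, sum_mul_sum, hpi, sum_map,
      sum_product]
    simp only [Fin.consEquiv, Function.Embedding.coeFn_mk, Equiv.coe_fn_mk, List.ofFn_succ,
      Fin.cons_zero, Fin.cons_succ, List.prod_cons]
    rfl

namespace Finset

variable {ι R : Type*} [LinearOrder ι] [Semiring R]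

theorem sort_insert_of_forall_lt {s : Finset ι} {b : ι} (hb : ∀ x ∈ s, x < b) :
    (insert b s).sort (· ≤ ·) = s.sort (· ≤ ·) ++ [b] := by
  have hsorted : (s.sort (· ≤ ·) ++ [b]).Pairwise (· < ·) :=
    List.pairwise_append.mpr ⟨(sortedLT_sort s).pairwise, by simp, by simpa using hb⟩
  have h := (List.toFinset_sort (· ≤ ·) hsorted.nodup).mpr (hsorted.imp le_of_lt)
  rwa [List.toFinset_append, sort_toFinset, List.toFinset_cons, List.toFinset_nil,
    insert_empty_eq, union_comm, ← insert_eq] at h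

def orderedEsymm (s : Finset ι) (f : ι → R) (d : ℕ) : R :=
  ∑ S ∈ s.powersetCard d, ((S.sort (· ≤ ·)).map f).prod

@[simp]
theorem orderedEsymm_zero (s : Finset ι) (f : ι → R) : s.orderedEsymm f 0 = 1 := by
  simp [orderedEsymm]

@[simp]
theorem orderedEsymm_empty_succ (f : ι → R) (d : ℕ) :
    (∅ : Finset ι).orderedEsymm f (d + 1) = 0 := by
  rw [orderedEsymm, powersetCard_eq_empty.mpr (by simp), sum_empty]

theorem orderedEsymm_insert_succ {s : Finset ι} {b : ι} (hb : ∀ x ∈ s, x < b) (f : ι → R)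
    (d : ℕ) :
    (insert b s).orderedEsymm f (d + 1) = s.orderedEsymm f (d + 1) + s.orderedEsymm f d * f b := by
  have hbs : b ∉ s := fun h => lt_irrefl b (hb b h)
  have hdisj : Disjoint (s.powersetCard (d + 1)) ((s.powersetCard d).image (insert b)) := by
    simp only [disjoint_left, mem_powersetCard, mem_image]
    rintro _ ⟨hS, -⟩ ⟨T, -, rfl⟩
    exact hbs (hS (mem_insert_self b T))
  rw [orderedEsymm, powersetCard_succ_insert hbs, sum_union hdisj,
    sum_image fun T hT U hU h => ?_, orderedEsymm, orderedEsymm, sum_mul]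
  · congr 1
    refine sum_congr rfl fun T hT => ?_
    rw [sort_insert_of_forall_lt fun x hx => hb x ((mem_powersetCard.mp hT).1 hx),
      List.map_append, List.prod_append, List.map_singleton, List.prod_singleton]
  · have hbT : b ∉ T := fun h => hbs ((mem_powersetCard.mp hT).1 h)
    have hbU : b ∉ U := fun h => hbs ((mem_powersetCard.mp hU).1 h)
    rw [← erase_insert hbT, h, erase_insert hbU]

end Finset

namespace Equiv.Perm

section

variable {α : Type*} [Fintype α] [DecidableEq α]

/-- `ℓ*` of the cycle type: the number of points minus the number of cycles, fixed points
included. -/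
def colength (σ : Perm α) : ℕ := #σ.support - Multiset.card σ.cycleType

theorem two_mul_card_cycleType_le (σ : Perm α) :
    2 * Multiset.card σ.cycleType ≤ #σ.support := by
  rw [← sum_cycleType, mul_comm, ← smul_eq_mul]
  exact Multiset.card_nsmul_le_sum fun _ => two_le_of_mem_cycleType

@[simp]
theorem colength_one : colength (1 : Perm α) = 0 := by simp [colength]

theorem colength_eq_zero_iff {σ : Perm α} : σ.colength = 0 ↔ σ = 1 := by
  refine ⟨fun h => ?_, fun h => h ▸ colength_one⟩
  have := two_mul_card_cycleType_le σ
  rw [← card_cycleType_eq_zero]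
  unfold colength at h
  omega

theorem Disjoint.colength_mul {σ τ : Perm α} (h : σ.Disjoint τ) :
    (σ * τ).colength = σ.colength + τ.colength := by
  have := two_mul_card_cycleType_le σ
  have := two_mul_card_cycleType_le τ
  simp only [colength, h.cycleType_mul, h.card_support_mul, Multiset.card_add]
  omega

theorem IsCycle.colength {c : Perm α} (hc : c.IsCycle) : c.colength = #c.support - 1 := by
  rw [Perm.colength, hc.cycleType, Multiset.card_singleton]

theorem IsCycle.colength_swap_mul {c : Perm α} (hc : c.IsCycle) {x : α} (hx : c x ≠ x) :
    (swap x (c x) * c).colength + 1 = c.colength := by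
  by_cases hxx : c (c x) = x
  · rw [hc.eq_swap_of_apply_apply_eq_self hx hxx, swap_apply_left, swap_mul_self, colength_one,
      (isCycle_swap hx.symm).colength, card_support_swap hx.symm]
  · have := hc.two_le_card_support
    rw [(hc.swap_mul hx hxx).colength, hc.colength, support_swap_mul_eq c x hxx,
      card_sdiff_of_subset (singleton_subset_iff.mpr (mem_support.mpr hx)), card_singleton]
    omega

theorem colength_swap_mul {σ : Perm α} {x : α} (hx : σ x ≠ x) :
    (swap x (σ x) * σ).colength + 1 = σ.colength := by
  set c := σ.cycleOf x
  have hcx : c x = σ x := σ.cycleOf_apply_self x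
  have hc : c.IsCycle := isCycle_cycleOf σ hx
  have hdisj : c.Disjoint (σ * c⁻¹) := (disjoint_mul_inv_of_mem_cycleFactorsFinset
    (cycleOf_mem_cycleFactorsFinset_iff.mpr (mem_support.mpr hx))).symm
  have hσ : σ = c * (σ * c⁻¹) := by rw [hdisj.commute.eq, inv_mul_cancel_right]
  have hsupp : (swap x (c x) * c).support ≤ c.support := by
    refine (support_mul_le _ _).trans (sup_le ?_ le_rfl)
    rw [support_swap (hcx ▸ hx).symm, insert_subset_iff, singleton_subset_iff]
    exact ⟨mem_support.mpr (hcx ▸ hx), apply_mem_support.mpr (mem_support.mpr (hcx ▸ hx))⟩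
  rw [← hcx, hσ, ← mul_assoc, (hdisj.mono hsupp le_rfl).colength_mul, add_right_comm,
    hc.colength_swap_mul (hcx ▸ hx), ← hdisj.colength_mul]

theorem colength_mul_swap {τ : Perm α} {a b : α} (hb : τ b = b) (hab : a ≠ b) :
    (τ * swap a b).colength = τ.colength + 1 := by
  have hσ : τ * swap a b = swap (τ a) b * τ := by rw [mul_swap_eq_swap_mul, hb]
  have hσb : (τ * swap a b) b = τ a := by simp
  have hmoved : (τ * swap a b) b ≠ b := by
    rw [hσb, ← hb]
    exact τ.injective.ne hab
  rw [← colength_swap_mul hmoved, hσb, hσ, swap_comm, swap_mul_self_mul]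

theorem support_mul_swap_subset (σ : Perm α) (a b : α) :
    (σ * swap a b).support ⊆ insert a (insert b σ.support) := by
  intro x hx
  by_contra h
  simp only [mem_insert, mem_support, not_or, not_not] at h
  obtain ⟨hxa, hxb, hσx⟩ := h
  exact mem_support.mp hx (by rw [mul_apply, swap_apply_of_ne_of_ne hxa hxb, hσx])

theorem support_subset_of_subset_insert {σ : Perm α} {s : Finset α} {b : α}
    (h : σ.support ⊆ insert b s) (hb : σ b = b) : σ.support ⊆ s :=
  fun _ hx => (mem_insert.mp (h hx)).resolve_left fun hxb => mem_support.mp hx (hxb ▸ hb)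

end

variable (k : Type*) {α : Type*} [Semiring k] [Fintype α] [LinearOrder α]

noncomputable def jucysMurphy (b : α) : MonoidAlgebra k (Perm α) :=
  ∑ a ∈ {a | a < b}, MonoidAlgebra.of k (Perm α) (swap a b)

noncomputable def colengthSum (s : Finset α) (d : ℕ) : MonoidAlgebra k (Perm α) :=
  ∑ σ ∈ {σ : Perm α | σ.support ⊆ s ∧ σ.colength = d}, MonoidAlgebra.of k (Perm α) σ

@[simp]
theorem colengthSum_zero (s : Finset α) : colengthSum k s 0 = 1 := by
  have : ({σ : Perm α | σ.support ⊆ s ∧ σ.colength = 0} : Finset _) = {1} := by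
    ext σ
    simp only [mem_filter, mem_univ, true_and, mem_singleton, colength_eq_zero_iff]
    exact ⟨And.right, fun h => ⟨by simp [h], h⟩⟩
  rw [colengthSum, this, sum_singleton, map_one]

@[simp]
theorem colengthSum_empty_succ (d : ℕ) : colengthSum k (∅ : Finset α) (d + 1) = 0 := by
  refine sum_eq_zero fun σ hσ => absurd (mem_filter.mp hσ).2 ?_
  rintro ⟨hsupp, hd⟩
  rw [support_eq_empty_iff.mp (subset_empty.mp hsupp), colength_one] at hd
  exact Nat.succ_ne_zero d hd.symm

variable {k}

theorem colengthSum_mul_jucysMurphy {s : Finset α} {b : α} (hs : ∀ x, x ∈ s ↔ x < b) (d : ℕ) :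
    colengthSum k s d * jucysMurphy k b =
      ∑ σ ∈ {σ : Perm α | (σ.support ⊆ insert b s ∧ σ.colength = d + 1) ∧ σ b ≠ b},
        MonoidAlgebra.of k (Perm α) σ := by
  have hbs : b ∉ s := fun h => lt_irrefl b ((hs b).mp h)
  rw [colengthSum, jucysMurphy, sum_mul_sum, ← sum_product']
  refine sum_nbij' (fun p => p.1 * swap p.2 b) (fun σ => (σ * swap (σ⁻¹ b) b, σ⁻¹ b))
    ?_ ?_ ?_ ?_ fun p _ => (map_mul _ _ _).symm
  · simp only [mem_product, mem_filter, mem_univ, true_and]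
    rintro ⟨τ, a⟩ ⟨⟨hτ, hd⟩, hab⟩
    have hτb : τ b = b := notMem_support.mp fun h => hbs (hτ h)
    refine ⟨⟨(support_mul_swap_subset τ a b).trans ?_, ?_⟩, ?_⟩
    · exact insert_subset_iff.mpr ⟨mem_insert_of_mem ((hs a).mpr hab), insert_subset_insert b hτ⟩
    · rw [colength_mul_swap hτb hab.ne, hd]
    · rw [mul_apply, swap_apply_right, ← hτb]
      exact τ.injective.ne hab.ne
  · simp only [mem_product, mem_filter, mem_univ, true_and]
    rintro σ ⟨⟨hσ, hd⟩, hσb⟩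
    set a := σ⁻¹ b
    have hσa : σ a = b := σ.apply_symm_apply b
    have hab : a ≠ b := fun h => hσb (h ▸ hσa)
    have has : a ∈ s :=
      (mem_insert.mp (hσ (mem_support.mpr (hσa ▸ hab.symm)))).resolve_left hab
    have hτb : (σ * swap a b) b = b := by rw [mul_apply, swap_apply_right, hσa]
    have hcol := colength_mul_swap hτb hab
    rw [mul_swap_mul_self, hd] at hcol
    refine ⟨⟨support_subset_of_subset_insert ((support_mul_swap_subset σ a b).trans ?_) hτb,
      by omega⟩, (hs a).mp has⟩
    exact insert_subset_iff.mpr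
      ⟨mem_insert_of_mem has, insert_subset_iff.mpr ⟨mem_insert_self b s, hσ⟩⟩
  · simp only [mem_product, mem_filter, mem_univ, true_and]
    rintro ⟨τ, a⟩ ⟨⟨hτ, -⟩, -⟩
    have : (τ * swap a b)⁻¹ b = a := by
      rw [inv_eq_iff_eq, mul_apply, swap_apply_left, notMem_support.mp fun h => hbs (hτ h)]
    simp only [this, mul_swap_mul_self]
  · intro σ _
    exact mul_swap_mul_self _ _ _

theorem colengthSum_insert_succ {s : Finset α} {b : α} (hs : ∀ x, x ∈ s ↔ x < b) (d : ℕ) :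
    colengthSum k (insert b s) (d + 1) =
      colengthSum k s (d + 1) + colengthSum k s d * jucysMurphy k b := by
  have hbs : b ∉ s := fun h => lt_irrefl b ((hs b).mp h)
  rw [colengthSum, ← sum_filter_add_sum_filter_not _ (fun σ : Perm α => σ b = b),
    colengthSum_mul_jucysMurphy hs, filter_filter, filter_filter]
  congr 1
  refine sum_congr ?_ fun _ _ => rfl
  ext σ
  simp only [mem_filter, mem_univ, true_and]
  exact ⟨fun ⟨⟨h, hd⟩, hb⟩ => ⟨support_subset_of_subset_insert h hb, hd⟩,
    fun ⟨h, hd⟩ => ⟨⟨h.trans (subset_insert b s), hd⟩, notMem_support.mp fun hb => hbs (h hb)⟩⟩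

theorem orderedEsymm_jucysMurphy {s : Finset α} (hs : IsLowerSet (s : Set α)) (d : ℕ) :
    s.orderedEsymm (jucysMurphy k) d = colengthSum k s d := by
  induction s using Finset.induction_on_max generalizing d with
  | empty => cases d <;> simp
  | insert b s hb ih =>
    have hs' : ∀ x, x ∈ s ↔ x < b := fun x =>
      ⟨hb x, fun hx => (mem_insert.mp (hs hx.le (mem_insert_self b s))).resolve_left hx.ne⟩
    have hlow : IsLowerSet (s : Set α) := fun x y hyx hx =>
      (hs' y).mpr (hyx.trans_lt ((hs' x).mp hx))
    cases d with
    | zero => simp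
    | succ d => rw [orderedEsymm_insert_succ hb, colengthSum_insert_succ hs', ih hlow, ih hlow]

end Equiv.Perm

section

variable {n : ℕ}

open Equiv Perm

theorem fullCycleType_eq_parts_partition (σ : Perm (Fin n)) :
    fullCycleType σ = σ.partition.parts := by
  rw [parts_partition, Fintype.card_fin]
  rfl

noncomputable def cycleTypePartition (σ : Perm (Fin n)) : n.Partition where
  parts := fullCycleType σ
  parts_pos h := σ.partition.parts_pos (fullCycleType_eq_parts_partition σ ▸ h)
  parts_sum := by rw [fullCycleType_eq_parts_partition, σ.partition.parts_sum, Fintype.card_fin]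

theorem sub_card_fullCycleType (σ : Perm (Fin n)) :
    n - Multiset.card (fullCycleType σ) = σ.colength := by
  have h1 : #σ.support ≤ n := (card_le_univ _).trans_eq (Fintype.card_fin n)
  have h2 := two_mul_card_cycleType_le σ
  rw [fullCycleType, Multiset.card_add, Multiset.card_replicate, colength]
  omega

theorem esymmJM_eq_sum_colength (d : ℕ) :
    esymmJM n d = ∑ σ ∈ {σ : Perm (Fin n) | σ.colength = d}, MonoidAlgebra.of ℂ _ σ := by
  change univ.orderedEsymm (jucysMurphy ℂ) d = _
  rw [orderedEsymm_jucysMurphy (by simpa using isLowerSet_univ), colengthSum]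
  simp only [subset_univ, true_and]

theorem esymmJM_eq_sum_cycleSum (d : ℕ) :
    esymmJM n d = ∑ ν ∈ {ν : n.Partition | n - Multiset.card ν.parts = d}, cycleSum n ν := by
  rw [esymmJM_eq_sum_colength, ← sum_fiberwise_of_maps_to (g := cycleTypePartition)
    (t := {ν : n.Partition | n - Multiset.card ν.parts = d})]
  · refine sum_congr rfl fun ν hν => sum_congr ?_ fun _ _ => rfl
    ext σ
    simp only [mem_filter, mem_univ, true_and] at hν ⊢
    rw [Nat.Partition.ext_iff, ← sub_card_fullCycleType]
    exact ⟨And.right, fun h => ⟨h ▸ hν, h⟩⟩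
  · intro σ hσ
    simpa [cycleTypePartition, sub_card_fullCycleType] using hσ

end

theorem esymmJM_mul_cycleSum_general (n : ℕ) (k : ℕ) (lam : Fin k → ℕ) (μ : Nat.Partition n) :
    (List.ofFn fun i : Fin k => esymmJM n (lam i)).prod * cycleSum n μ =
      ∑ μs ∈ Finset.univ.filter
          (fun μs : Fin k → Nat.Partition n => ∀ i, n - (μs i).parts.card = lam i),
        (List.ofFn fun i : Fin k => cycleSum n (μs i)).prod * cycleSum n μ := by
  simp_rw [esymmJM_eq_sum_cycleSum]
  rw [List.prod_ofFn_sum, sum_mul]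
  refine sum_congr ?_ fun _ _ => rfl
  ext μs
  simp

/-- for a partition `λ = (λ_1,…,λ_k)` and a partition `μ` of `n`,
`e_λ(J_1,…,J_n) · C_μ = Σ C_{μ^(1)} ⋯ C_{μ^(k)} C_μ`, summed over all ordered `k`-tuples
`(μ^(1),…,μ^(k))` of partitions of `n` with colength `ℓ*(μ^(i)) = n − ℓ(μ^(i)) = λ_i`. -/
theorem esymmJM_mul_cycleSum (n : ℕ) (hn : 1 ≤ n) (k : ℕ) (hk : 1 ≤ k) (lam : Fin k → ℕ)
    (hpos : ∀ i, 0 < lam i) (hanti : Antitone lam) (μ : Nat.Partition n) :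
    (List.ofFn fun i : Fin k => esymmJM n (lam i)).prod * cycleSum n μ =
      ∑ μs ∈ Finset.univ.filter
          (fun μs : Fin k → Nat.Partition n => ∀ i, n - (μs i).parts.card = lam i),
        (List.ofFn fun i : Fin k => cycleSum n (μs i)).prod * cycleSum n μ :=
  esymmJM_mul_cycleSum_general n k lam μ
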